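/- arXiv:1808.01364 — 3 statements merged into one kernel-verified Lean document; each statement's English description precedes it below -/
import Mathlib

section
/- Interior elimination operators commute in effect: if A is SPD with disjoint index sets I_1, I_2 such that A_{I_1 I_2} = 0 and also A_{B_1 I_2} = 0, A_{B_2 I_1} = 0 (where B_i is the boundary set of I_i), then M_{I_1} M_{I_2} = M_{I_2} M_{I_1} for the corresponding elimination matrices, and hence their product is well-defined independently of the order. -/
open Matrix

/-- Commutativity of interior elimination operators for disjoint
interior sets whose boundaries may only overlap with each other. -/
theorem stmt_8 {ι : Type*} [Fintype ι] [DecidableEq ι]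
    (A : Matrix ι ι ℝ) (hA : A.PosDef)
    (I₁ B₁ I₂ B₂ : Finset ι)
    -- pairwise disjointness, except possibly B₁ ∩ B₂
    (hI₁B₁ : Disjoint I₁ B₁) (hI₂B₂ : Disjoint I₂ B₂)
    (hI₁I₂ : Disjoint I₁ I₂) (hI₁B₂ : Disjoint I₁ B₂) (hI₂B₁ : Disjoint I₂ B₁)
    -- A_{R_i I_i} = 0 : rows outside I_i ∪ B_i do not interact with I_i
    (hR₁ : ∀ x y, x ∉ I₁ → x ∉ B₁ → y ∈ I₁ → A x y = 0)
    (hR₂ : ∀ x y, x ∉ I₂ → x ∉ B₂ → y ∈ I₂ → A x y = 0)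
    -- Cholesky factors of the interior blocks
    (L₁ : Matrix {x // x ∈ I₁} {x // x ∈ I₁} ℝ)
    (hL₁ : A.submatrix (fun a : {x // x ∈ I₁} => a.1) (fun a : {x // x ∈ I₁} => a.1)
      = L₁ * L₁ᵀ) (hL₁u : IsUnit L₁)
    (L₂ : Matrix {x // x ∈ I₂} {x // x ∈ I₂} ℝ)
    (hL₂ : A.submatrix (fun a : {x // x ∈ I₂} => a.1) (fun a : {x // x ∈ I₂} => a.1)
      = L₂ * L₂ᵀ) (hL₂u : IsUnit L₂)
    -- the (I_i, B_i) blocks -A_{I_i I_i}⁻¹ A_{B_i I_i}ᵀ of the elimination matrices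
    (H₁ : Matrix {x // x ∈ I₁} {x // x ∈ B₁} ℝ)
    (hH₁ : H₁ =
      -((A.submatrix (fun a : {x // x ∈ I₁} => a.1) (fun a : {x // x ∈ I₁} => a.1))⁻¹ *
        (A.submatrix (fun a : {x // x ∈ B₁} => a.1) (fun a : {x // x ∈ I₁} => a.1))ᵀ))
    (H₂ : Matrix {x // x ∈ I₂} {x // x ∈ B₂} ℝ)
    (hH₂ : H₂ =
      -((A.submatrix (fun a : {x // x ∈ I₂} => a.1) (fun a : {x // x ∈ I₂} => a.1))⁻¹ *
        (A.submatrix (fun a : {x // x ∈ B₂} => a.1) (fun a : {x // x ∈ I₂} => a.1))ᵀ))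
    -- the elimination matrices: identity except on the (I_i, I_i) and (I_i, B_i) blocks
    (M₁ M₂ : Matrix ι ι ℝ)
    (hM₁ : ∀ x y, M₁ x y =
      if hx : x ∈ I₁ then
        (if hy : y ∈ I₁ then ((L₁⁻¹)ᵀ) ⟨x, hx⟩ ⟨y, hy⟩
         else if hy : y ∈ B₁ then H₁ ⟨x, hx⟩ ⟨y, hy⟩
         else 0)
      else if x = y then 1 else 0)
    (hM₂ : ∀ x y, M₂ x y =
      if hx : x ∈ I₂ then
        (if hy : y ∈ I₂ then ((L₂⁻¹)ᵀ) ⟨x, hx⟩ ⟨y, hy⟩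
         else if hy : y ∈ B₂ then H₂ ⟨x, hx⟩ ⟨y, hy⟩
         else 0)
      else if x = y then 1 else 0) :
    M₁ * M₂ = M₂ * M₁ := by
  have h1 : ∀ x z, x ∉ I₁ → M₁ x z = if x = z then 1 else 0 := by
    intro x z hx; rw [hM₁]; simp [hx]
  have h2 : ∀ x z, x ∉ I₂ → M₂ x z = if x = z then 1 else 0 := by
    intro x z hx; rw [hM₂]; simp [hx]
  have k1 : ∀ x z, x ∈ I₁ → z ∈ I₂ → M₁ x z = 0 := by
    intro x z hx hz
    have hz1 : z ∉ I₁ := Finset.disjoint_right.mp hI₁I₂ hz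
    have hz2 : z ∉ B₁ := Finset.disjoint_left.mp hI₂B₁ hz
    rw [hM₁]; simp [hx, hz1, hz2]
  have k2 : ∀ x z, x ∈ I₂ → z ∈ I₁ → M₂ x z = 0 := by
    intro x z hx hz
    have hz1 : z ∉ I₂ := Finset.disjoint_left.mp hI₁I₂ hz
    have hz2 : z ∉ B₂ := Finset.disjoint_left.mp hI₁B₂ hz
    rw [hM₂]; simp [hx, hz1, hz2]
  ext x y
  rw [Matrix.mul_apply, Matrix.mul_apply]
  by_cases hx1 : x ∈ I₁
  · have hx2 : x ∉ I₂ := Finset.disjoint_left.mp hI₁I₂ hx1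
    have e1 : ∀ z, M₁ x z * M₂ z y = M₁ x z * (if z = y then 1 else 0) := by
      intro z
      by_cases hz : z ∈ I₂
      · rw [k1 x z hx1 hz]; ring
      · rw [h2 z y hz]
    rw [Finset.sum_congr rfl (fun z _ => e1 z)]
    have e2 : ∀ z, M₂ x z * M₁ z y = (if x = z then 1 else 0) * M₁ z y := by
      intro z; rw [h2 x z hx2]
    rw [Finset.sum_congr rfl (fun z _ => e2 z)]
    simp [mul_boole, boole_mul]
  · by_cases hx2 : x ∈ I₂
    · have e1 : ∀ z, M₁ x z * M₂ z y = (if x = z then 1 else 0) * M₂ z y := by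
        intro z; rw [h1 x z hx1]
      rw [Finset.sum_congr rfl (fun z _ => e1 z)]
      have e2 : ∀ z, M₂ x z * M₁ z y = M₂ x z * (if z = y then 1 else 0) := by
        intro z
        by_cases hz : z ∈ I₁
        · rw [k2 x z hx2 hz]; ring
        · rw [h1 z y hz]
      rw [Finset.sum_congr rfl (fun z _ => e2 z)]
      simp [mul_boole, boole_mul]
    · have e1 : ∀ z, M₁ x z * M₂ z y = (if x = z then 1 else 0) * M₂ z y := by
        intro z; rw [h1 x z hx1]
      have e2 : ∀ z, M₂ x z * M₁ z y = (if x = z then 1 else 0) * M₁ z y := by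
        intro z; rw [h2 x z hx2]
      rw [Finset.sum_congr rfl (fun z _ => e1 z),
          Finset.sum_congr rfl (fun z _ => e2 z)]
      simp [boole_mul, h1 x y hx1, h2 x y hx2]
end

section
/- Multilevel solve error bound: with A_{ℓ+1} = R_ℓ^T A_ℓ R_ℓ + E_ℓ, A_L = B_L B_L^T with B_L invertible, and G = R_0^{-T} ⋯ R_{L−1}^{-T} B_L, the solve error satisfies ‖I − G^{-1} A_0 G^{-T}‖ ≤ ‖B_L^{-1}‖² · Σ_{ℓ=0}^{L−1} ‖E_ℓ‖ · ‖R_{ℓ+1} ⋯ R_{L−1}‖². -/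
/-!
Unrolling the recurrence gives
`A_L = Pᵀ A_0 P + ∑_ℓ Q_ℓᵀ E_ℓ Q_ℓ` with `P = R_0 ⋯ R_{L-1}` and `Q_ℓ = R_{ℓ+1} ⋯ R_{L-1}`.
Since `G⁻¹ = B⁻¹ Pᵀ` and `B⁻¹ A_L B⁻ᵀ = 1`, the solve error is the congruence
`B⁻¹ (∑_ℓ Q_ℓᵀ E_ℓ Q_ℓ) B⁻ᵀ`, and `‖Xᵀ M X‖ ≤ ‖M‖ ‖X‖²` bounds each piece.
-/

open Matrix
open scoped Matrix.Norms.L2Operator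

section Algebra

variable {n α : Type*} [Fintype n] [DecidableEq n]

theorem unroll_congruence_recurrence [CommSemiring α] (A R E : ℕ → Matrix n n α) (L : ℕ)
    (hrec : ∀ ℓ < L, A (ℓ + 1) = (R ℓ)ᵀ * A ℓ * R ℓ + E ℓ) :
    A L = (((List.range L).map R).prod)ᵀ * A 0 * ((List.range L).map R).prod
      + ∑ ℓ ∈ Finset.range L,
          (((List.Ico (ℓ + 1) L).map R).prod)ᵀ * E ℓ * ((List.Ico (ℓ + 1) L).map R).prod := by
  induction L with
  | zero => simp
  | succ L ih =>
    have hprod : ((List.range (L + 1)).map R).prod = ((List.range L).map R).prod * R L := by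
      simp [List.range_succ]
    have htail : ∀ ℓ ∈ Finset.range L,
        (((List.Ico (ℓ + 1) (L + 1)).map R).prod)ᵀ * E ℓ * ((List.Ico (ℓ + 1) (L + 1)).map R).prod
          = (R L)ᵀ * ((((List.Ico (ℓ + 1) L).map R).prod)ᵀ * E ℓ
              * ((List.Ico (ℓ + 1) L).map R).prod) * R L := by
      intro ℓ hℓ
      rw [List.Ico.succ_top (Finset.mem_range.mp hℓ)]
      simp [transpose_mul, Matrix.mul_assoc]
    rw [hrec L L.lt_succ_self, ih fun ℓ hℓ => hrec ℓ (Nat.lt_succ_of_lt hℓ), hprod,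
      Finset.sum_range_succ, Finset.sum_congr rfl htail]
    simp [transpose_mul, Matrix.mul_add, Matrix.add_mul, Finset.sum_mul, Finset.mul_sum,
      Matrix.mul_assoc, List.Ico.self_empty, add_assoc]

theorem inv_mul_mul_inv_transpose_of_mul_transpose [CommRing α] {B : Matrix n n α} (hB : IsUnit B) :
    B⁻¹ * (B * Bᵀ) * (B⁻¹)ᵀ = 1 := by
  have hBd : IsUnit B.det := (isUnit_iff_isUnit_det B).mp hB
  rw [transpose_nonsing_inv, ← Matrix.mul_assoc, nonsing_inv_mul B hBd, Matrix.one_mul,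
    mul_nonsing_inv _ (by rwa [det_transpose])]

theorem inv_transpose_inv_mul_congr [CommRing α] {P : Matrix n n α} (hP : IsUnit P) (B M : Matrix n n α) :
    ((P⁻¹)ᵀ * B)⁻¹ * M * (((P⁻¹)ᵀ * B)⁻¹)ᵀ = B⁻¹ * (Pᵀ * M * P) * (B⁻¹)ᵀ := by
  have hPd : IsUnit Pᵀ.det := by rwa [det_transpose, ← isUnit_iff_isUnit_det]
  rw [Matrix.mul_inv_rev, transpose_nonsing_inv, nonsing_inv_nonsing_inv _ hPd]
  simp only [transpose_mul, transpose_transpose, Matrix.mul_assoc]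

end Algebra

section Norm

variable {n : Type*} [Fintype n] [DecidableEq n]

theorem l2_opNorm_transpose (M : Matrix n n ℝ) : ‖Mᵀ‖ = ‖M‖ := by
  rw [← conjTranspose_eq_transpose_of_trivial]
  exact l2_opNorm_conjTranspose M

theorem l2_opNorm_transpose_mul_mul_le (X M : Matrix n n ℝ) :
    ‖Xᵀ * M * X‖ ≤ ‖M‖ * ‖X‖ ^ 2 :=
  calc ‖Xᵀ * M * X‖ ≤ ‖Xᵀ‖ * ‖M‖ * ‖X‖ := norm_mul₃_le
    _ = ‖M‖ * ‖X‖ ^ 2 := by rw [l2_opNorm_transpose]; ring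

end Norm

/-- Multilevel solve error bound for the hierarchical factorization. -/
theorem stmt_16 {N : ℕ} (L : ℕ)
    (A R E : ℕ → Matrix (Fin N) (Fin N) ℝ)
    (hR : ∀ ℓ, IsUnit (R ℓ))
    (hrec : ∀ ℓ < L, A (ℓ + 1) = (R ℓ)ᵀ * A ℓ * R ℓ + E ℓ)
    (B : Matrix (Fin N) (Fin N) ℝ) (hB : IsUnit B) (hAL : A L = B * Bᵀ)
    (G : Matrix (Fin N) (Fin N) ℝ)
    (hG : G = ((((List.range L).map R).prod)⁻¹)ᵀ * B) :
    ‖1 - G⁻¹ * A 0 * (G⁻¹)ᵀ‖ ≤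
      ‖B⁻¹‖ ^ 2 * ∑ ℓ ∈ Finset.range L,
        ‖E ℓ‖ * ‖((List.Ico (ℓ + 1) L).map R).prod‖ ^ 2 := by
  have hP : IsUnit ((List.range L).map R).prod :=
    List.prod_isUnit (by simpa using fun ℓ _ => hR ℓ)
  have hunroll := unroll_congruence_recurrence A R E L hrec
  set Q := fun ℓ => ((List.Ico (ℓ + 1) L).map R).prod
  set S := ∑ ℓ ∈ Finset.range L, (Q ℓ)ᵀ * E ℓ * Q ℓ
  have herror : 1 - G⁻¹ * A 0 * (G⁻¹)ᵀ = B⁻¹ * S * (B⁻¹)ᵀ := by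
    rw [hG, inv_transpose_inv_mul_congr hP, ← inv_mul_mul_inv_transpose_of_mul_transpose hB, ← hAL,
      ← Matrix.sub_mul, ← Matrix.mul_sub, hunroll, add_sub_cancel_left]
  calc ‖1 - G⁻¹ * A 0 * (G⁻¹)ᵀ‖
      ≤ ‖S‖ * ‖B⁻¹‖ ^ 2 := by
        simpa only [herror, transpose_transpose, l2_opNorm_transpose]
          using l2_opNorm_transpose_mul_mul_le (B⁻¹)ᵀ S
    _ ≤ (∑ ℓ ∈ Finset.range L, ‖E ℓ‖ * ‖Q ℓ‖ ^ 2) * ‖B⁻¹‖ ^ 2 := by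
        gcongr
        exact (norm_sum_le _ _).trans
          (Finset.sum_le_sum fun ℓ _ => l2_opNorm_transpose_mul_mul_le _ _)
    _ = _ := mul_comm _ _
end

section
/- If G is invertible and ‖I − G^{-1} A G^{-T}‖ ≤ ε < 1 (spectral norm), then A is invertible, and the relative inverse error satisfies ‖A^{-1} − F^{-1}‖ ≤ ε/(1−ε) · ‖A^{-1}‖ where F = G G^T. -/
/-!
Put `M = G⁻¹ A G⁻ᵀ` and `Z = G⁻ᵀ`, so that `A⁻¹ = Z M⁻¹ Zᵀ` and `F⁻¹ = Z Zᵀ`. Since `‖1 - M‖ < 1`,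
the symmetric matrix `M` is positive definite, and `S = √(M⁻¹)` commutes with `M`. With `Y = Z S`
this gives `A⁻¹ = Y Yᵀ` and `A⁻¹ - F⁻¹ = Y (1 - M) Yᵀ`, so the C⋆-identity `‖Y Yᵀ‖ = ‖Y‖²` yields
even `‖A⁻¹ - F⁻¹‖ ≤ ε ‖A⁻¹‖`.
-/
open Matrix
open scoped Matrix.Norms.L2Operator ComplexOrder

theorem mul_one_sub_mul_eq_mul_self_sub_one {R : Type*} [Ring R] {s m : R}
    (h₁ : s * s * m = 1) (h₂ : m * (s * s) = 1) : s * (1 - m) * s = s * s - 1 := by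
  -- `s * m` is a right and `m * s` a left inverse of `s`, so they agree
  have hcomm : m * s = s * m := by
    calc m * s = m * s * (s * s * m) := by rw [h₁, mul_one]
      _ = m * (s * s) * (s * m) := by noncomm_ring
      _ = s * m := by rw [h₂, one_mul]
  have hsms : s * m * s = 1 := by rw [← hcomm, mul_assoc, h₂]
  rw [mul_sub, mul_one, sub_mul, hsms]

theorem CStarRing.norm_mul_mul_star_le {R : Type*} [NonUnitalNormedRing R] [StarRing R]
    [CStarRing R] (y e : R) : ‖y * e * star y‖ ≤ ‖e‖ * ‖y * star y‖ := by
  calc ‖y * e * star y‖ ≤ ‖y‖ * ‖e‖ * ‖star y‖ := norm_mul₃_le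
    _ = ‖e‖ * ‖y * star y‖ := by rw [norm_star, CStarRing.norm_self_mul_star]; ring

theorem CStarRing.norm_mul_mul_star_sub_mul_star_le {R : Type*} [NormedRing R] [StarRing R]
    [CStarRing R] (z : R) {s m : R} (hs : IsSelfAdjoint s) (h₁ : s * s * m = 1)
    (h₂ : m * (s * s) = 1) :
    ‖z * (s * s) * star z - z * star z‖ ≤ ‖1 - m‖ * ‖z * (s * s) * star z‖ := by
  have hdiff : z * (s * s) * star z - z * star z = z * s * (1 - m) * star (z * s) := by
    rw [star_mul, hs.star_eq]
    calc z * (s * s) * star z - z * star z = z * (s * s - 1) * star z := by noncomm_ring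
      _ = z * (s * (1 - m) * s) * star z := by rw [mul_one_sub_mul_eq_mul_self_sub_one h₁ h₂]
      _ = z * s * (1 - m) * (s * star z) := by noncomm_ring
  have hsq : z * (s * s) * star z = z * s * star (z * s) := by
    rw [star_mul, hs.star_eq]; noncomm_ring
  rw [hdiff, hsq]
  exact norm_mul_mul_star_le _ _

section Matrix

variable {n 𝕜 : Type*} [Fintype n] [DecidableEq n] [RCLike 𝕜]

theorem Matrix.IsHermitian.posDef_of_norm_one_sub_lt_one {M : Matrix n n 𝕜}
    (hM : M.IsHermitian) (h : ‖1 - M‖ < 1) : M.PosDef := by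
  refine hM.posDef_iff_eigenvalues_pos.mpr fun i => ?_
  have : Nonempty n := ⟨i⟩
  have hmem : ((1 - hM.eigenvalues i : ℝ) : 𝕜) ∈ spectrum 𝕜 (1 - M) := by
    have := spectrum.algebraMap_mem 𝕜 (hM.eigenvalues_mem_spectrum_real i)
    rw [← map_one (algebraMap 𝕜 (Matrix n n 𝕜)), ← spectrum.singleton_sub_eq]
    exact ⟨1, rfl, _, this, by simp⟩
  have := (spectrum.norm_le_norm_of_mem hmem).trans_lt h
  rw [RCLike.norm_ofReal] at this
  linarith [le_abs_self (1 - hM.eigenvalues i)]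

open scoped MatrixOrder in
theorem Matrix.PosDef.norm_mul_inv_mul_conjTranspose_sub_le {M : Matrix n n 𝕜} (hM : M.PosDef)
    (Z : Matrix n n 𝕜) : ‖Z * M⁻¹ * Zᴴ - Z * Zᴴ‖ ≤ ‖1 - M‖ * ‖Z * M⁻¹ * Zᴴ‖ := by
  have hS : CFC.sqrt M⁻¹ * CFC.sqrt M⁻¹ = M⁻¹ := CFC.sqrt_mul_sqrt_self _ hM.inv.posSemidef.nonneg
  have hdet := (Matrix.isUnit_iff_isUnit_det M).mp hM.isUnit
  simpa only [hS, star_eq_conjTranspose] using CStarRing.norm_mul_mul_star_sub_mul_star_le Z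
    (CFC.sqrt_nonneg M⁻¹).isSelfAdjoint (by rw [hS, nonsing_inv_mul _ hdet])
    (by rw [hS, mul_nonsing_inv _ hdet])

end Matrix

/-- A small solve error implies invertibility of `A` and a relative
bound on the inverse approximation error of `F = GGᵀ`. -/
theorem stmt_19 {N : ℕ}
    (A G : Matrix (Fin N) (Fin N) ℝ)
    (hA : A.IsSymm) (hG : IsUnit G)
    (ε : ℝ) (hε0 : 0 ≤ ε) (hε1 : ε < 1)
    (h : ‖1 - G⁻¹ * A * (G⁻¹)ᵀ‖ ≤ ε) :
    IsUnit A ∧ ‖A⁻¹ - (G * Gᵀ)⁻¹‖ ≤ ε / (1 - ε) * ‖A⁻¹‖ := by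
  have hG_det := (isUnit_iff_isUnit_det G).mp hG
  set M := G⁻¹ * A * (G⁻¹)ᵀ with hM_def
  have hA_eq : A = G * M * Gᵀ := by
    calc A = G * G⁻¹ * A * (G * G⁻¹)ᵀ := by
          rw [mul_nonsing_inv _ hG_det, transpose_one, one_mul, mul_one]
      _ = G * M * Gᵀ := by rw [transpose_mul, hM_def]; noncomm_ring
  have hM_pd : M.PosDef := by
    refine IsHermitian.posDef_of_norm_one_sub_lt_one ?_ (h.trans_lt hε1)
    rw [IsHermitian, conjTranspose_eq_transpose_of_trivial, hM_def, transpose_mul, transpose_mul,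
      transpose_transpose, hA.eq, mul_assoc]
  have hZ : (G⁻¹)ᵀᴴ = G⁻¹ := by rw [conjTranspose_eq_transpose_of_trivial, transpose_transpose]
  have hA_inv : A⁻¹ = (G⁻¹)ᵀ * M⁻¹ * (G⁻¹)ᵀᴴ := by
    rw [hZ, hA_eq, Matrix.mul_inv_rev, Matrix.mul_inv_rev, transpose_nonsing_inv, mul_assoc]
  have hF_inv : (G * Gᵀ)⁻¹ = (G⁻¹)ᵀ * (G⁻¹)ᵀᴴ := by
    rw [hZ, Matrix.mul_inv_rev, transpose_nonsing_inv]
  refine ⟨hA_eq ▸ (hG.mul hM_pd.isUnit).mul ((isUnit_transpose G).mpr hG), ?_⟩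
  calc ‖A⁻¹ - (G * Gᵀ)⁻¹‖ ≤ ‖1 - M‖ * ‖A⁻¹‖ := by
        rw [hA_inv, hF_inv]; exact hM_pd.norm_mul_inv_mul_conjTranspose_sub_le _
    _ ≤ ε * ‖A⁻¹‖ := by gcongr
    _ ≤ ε / (1 - ε) * ‖A⁻¹‖ := by
        gcongr; exact le_div_self hε0 (by linarith) (by linarith)
end
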